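/- Let G be a directed Eulerian graph without parallel edges or self-loops, and let v be a node with d(v) = 2 that is not a cut node of U(G), with in-neighbors u1, u2 and out-neighbors w1, w2. Then there exists an Eulerian circuit of G in which the walk (u1, v, w1) does not appear. -/

import Mathlib

/-!
Since `d(v) = 2`, an Eulerian circuit visits `v` exactly twice, so up to rotation it is
`v X v Y` with `v ∉ X, Y`, and its transitions through `v` are `(last X, v, head Y)` and
`(last Y, v, head X)`. Every edge of `U(G) - v` lies within `X` or within `Y`, so if `v` is not a
cut node then `X = X₁ z X₂` and `Y = Y₁ z Y₂` share a vertex `z`. The circuit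
`v X₁ z Y₂ v Y₁ z X₂` uses the same edges, and its transitions through `v` are
`(last Y, v, head Y)` and `(last X, v, head X)`. As the edges `(v, head X), (v, head Y)` are distinct, and so are
`(last X, v), (last Y, v)`, no transition through `v` occurs in both circuits.
-/

/-- The underlying undirected simple graph of a directed graph `E` (no self-loops). -/
def underlyingUG {V : Type*} (E : V → V → Prop) : SimpleGraph V where
  Adj a b := a ≠ b ∧ (E a b ∨ E b a)
  symm := ⟨fun a b h => ⟨h.1.symm, h.2.symm⟩⟩
  loopless := ⟨fun a h => h.1 rfl⟩

/-- Out-degree of `v`: number of out-neighbors. -/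
noncomputable def outdeg {V : Type*} (E : V → V → Prop) (v : V) : ℕ := Set.ncard {w | E v w}

/-- In-degree of `v`: number of in-neighbors. -/
noncomputable def indeg {V : Type*} (E : V → V → Prop) (v : V) : ℕ := Set.ncard {u | E u v}

/-- The cyclic sequence of consecutive pairs of a circuit given as a vertex list. -/
def cyclicPairs {V : Type*} (c : List V) : List (V × V) := c.zip (c.rotate 1)

/-- `c` is an Eulerian circuit: a nonempty closed walk using every edge exactly once. -/
def IsEulerianCircuit {V : Type*} (E : V → V → Prop) (c : List V) : Prop :=
  c ≠ [] ∧ (cyclicPairs c).Nodup ∧ ∀ p : V × V, p ∈ cyclicPairs c ↔ E p.1 p.2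

/-- The walk `q` appears (cyclically, as consecutive edges) in the circuit `c`. -/
def Appears {V : Type*} (q c : List V) : Prop :=
  ∃ k, (q.zip q.tail) <:+: cyclicPairs (c.rotate k)

/-- `v` is a cut node of the connected undirected graph `H`. -/
def IsCutNode {V : Type*} (H : SimpleGraph V) (v : V) : Prop :=
  ¬ (H.induce {u | u ≠ v}).Connected

/-- The underlying undirected graph with node `v` (and incident edges) removed. -/
def delNode {V : Type*} (E : V → V → Prop) (v : V) := (underlyingUG E).induce {u | u ≠ v}

def walkPairs {V : Type*} (l : List V) : List (V × V) := l.zip l.tail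

section Lists

variable {V : Type*}

@[simp]
lemma walkPairs_nil : walkPairs ([] : List V) = [] := rfl

@[simp]
lemma walkPairs_singleton (a : V) : walkPairs [a] = [] := rfl

@[simp]
lemma walkPairs_cons_cons (a b : V) (l : List V) :
    walkPairs (a :: b :: l) = (a, b) :: walkPairs (b :: l) := rfl

lemma walkPairs_append_cons (l₁ : List V) (m : V) (l₂ : List V) :
    walkPairs (l₁ ++ m :: l₂) = walkPairs (l₁ ++ [m]) ++ walkPairs (m :: l₂) := by
  induction l₁ with
  | nil => simp
  | cons a l₁ ih => cases l₁ <;> simp_all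

lemma mem_walkPairs_append_cons_cons (s : List V) (a b : V) (t : List V) :
    (a, b) ∈ walkPairs (s ++ a :: b :: t) := by
  rw [walkPairs_append_cons]
  simp

lemma mem_of_mem_walkPairs {a b : V} {l : List V} (h : (a, b) ∈ walkPairs l) :
    a ∈ l ∧ b ∈ l :=
  ⟨(List.of_mem_zip h).1, List.mem_of_mem_tail (List.of_mem_zip h).2⟩

lemma cyclicPairs_cons (a : V) (l : List V) : cyclicPairs (a :: l) = walkPairs (a :: l ++ [a]) := by
  have h := List.zip_append (l₁ := a :: l) (r₁ := [a]) (l₂ := l ++ [a]) (r₂ := []) (by simp)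
  simpa [cyclicPairs, walkPairs] using h.symm

lemma cyclicPairs_rotate (l : List V) (n : ℕ) :
    cyclicPairs (l.rotate n) = (cyclicPairs l).rotate n := by
  rw [cyclicPairs, cyclicPairs, List.zip_eq_zipWith, List.zip_eq_zipWith,
    List.zipWith_rotate_distrib _ _ _ _ (by simp),
    List.rotate_rotate, List.rotate_rotate, Nat.add_comm]

lemma mem_cyclicPairs_append_cons_cons (s : List V) (a b : V) (t : List V) :
    (a, b) ∈ cyclicPairs (s ++ a :: b :: t) := by
  cases s with
  | nil => simp [cyclicPairs_cons]
  | cons c s =>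
    simpa [cyclicPairs_cons] using mem_walkPairs_append_cons_cons (c :: s) a b (t ++ [c])

lemma List.Nodup.eq_of_mem_zip_of_mem_zip {α β : Type*} {l : List α} {m : List β} (hl : l.Nodup)
    {a : α} {b b' : β} (h : (a, b) ∈ l.zip m) (h' : (a, b') ∈ l.zip m) : b = b' := by
  obtain ⟨i, hi, hab⟩ := List.mem_iff_getElem.mp h
  obtain ⟨j, hj, hab'⟩ := List.mem_iff_getElem.mp h'
  simp only [List.getElem_zip, Prod.mk.injEq] at hab hab'
  have hij : i = j := (hl.getElem_inj_iff (hi := by simp at hi; omega)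
    (hj := by simp at hj; omega)).mp (hab.1.trans hab'.1.symm)
  subst hij
  exact hab.2.symm.trans hab'.2

lemma List.Nodup.eq_of_mem_cyclicPairs {l : List V} (hl : l.Nodup) {a b b' : V}
    (h : (a, b) ∈ cyclicPairs l) (h' : (a, b') ∈ cyclicPairs l) : b = b' :=
  hl.eq_of_mem_zip_of_mem_zip h h'

lemma mem_cyclicPairs_cyclicPairs_of_appears {c : List V} {x y z : V} (h : Appears [x, y, z] c) :
    ((x, y), (y, z)) ∈ cyclicPairs (cyclicPairs c) := by
  obtain ⟨k, s, t, hst⟩ := h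
  have hmem : ((x, y), (y, z)) ∈ cyclicPairs (cyclicPairs (c.rotate k)) := by
    rw [← hst]
    simpa using mem_cyclicPairs_append_cons_cons s (x, y) (y, z) t
  rwa [cyclicPairs_rotate, cyclicPairs_rotate, List.mem_rotate] at hmem

end Lists

lemma List.exists_rotate_eq_cons_append_cons {α : Type*} [DecidableEq α] {l : List α} {a : α}
    (h : l.count a = 2) : ∃ n X Y, l.rotate n = a :: X ++ a :: Y ∧ a ∉ X ∧ a ∉ Y := by
  obtain ⟨s, t, rfl⟩ := List.append_of_mem (List.count_pos_iff.mp (by omega : 0 < l.count a))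
  have hts : (t ++ s).count a = 1 := by simp [List.count_append] at h ⊢; omega
  obtain ⟨X, Y, hXY⟩ :=
    List.append_of_mem (List.count_pos_iff.mp (by omega : 0 < (t ++ s).count a))
  rw [hXY] at hts
  simp only [List.count_append, List.count_cons_self] at hts
  refine ⟨s.length, X, Y, ?_, List.count_eq_zero.mp (by omega),
    List.count_eq_zero.mp (by omega)⟩
  rw [List.rotate_append_length_eq, List.cons_append, hXY, List.cons_append]

section TwoVisits

variable {V : Type*} {v : V} {X Y : List V}

lemma rotate_cons_append_cons (v : V) (X Y : List V) :
    (v :: X ++ v :: Y).rotate (X.length + 1) = v :: Y ++ v :: X := by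
  simp

lemma cyclicPairs_cons_append_cons (v : V) (X Y : List V) :
    cyclicPairs (v :: X ++ v :: Y) = walkPairs (v :: X ++ [v]) ++ walkPairs (v :: Y ++ [v]) := by
  rw [List.cons_append, cyclicPairs_cons,
    show v :: (X ++ v :: Y) ++ [v] = (v :: X) ++ v :: (Y ++ [v]) by simp, walkPairs_append_cons]
  rfl

lemma mem_cyclicPairs_cyclicPairs_cons_append_cons_comm {p : (V × V) × (V × V)} :
    p ∈ cyclicPairs (cyclicPairs (v :: X ++ v :: Y)) ↔
      p ∈ cyclicPairs (cyclicPairs (v :: Y ++ v :: X)) := by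
  rw [← rotate_cons_append_cons, cyclicPairs_rotate, cyclicPairs_rotate, List.mem_rotate]

lemma mem_of_mem_cyclicPairs_cons_append_cons {a b : V}
    (h : (a, b) ∈ cyclicPairs (v :: X ++ v :: Y)) (ha : a ≠ v) (hb : b ≠ v) :
    (a ∈ X ∧ b ∈ X) ∨ (a ∈ Y ∧ b ∈ Y) := by
  rw [cyclicPairs_cons_append_cons, List.mem_append] at h
  rcases h with h | h <;> have := mem_of_mem_walkPairs h <;> simp_all

lemma getLast?_eq_of_mem_walkPairs_append {u w : V} :
    ∀ {l : List V}, w ∉ l.tail → (u, w) ∈ walkPairs (l ++ [w]) → l.getLast? = some u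
  | [], _, h => by simp at h
  | [a], _, h => by simp_all
  | a :: b :: l, hw, h => by
    simp only [List.tail_cons, List.mem_cons, not_or] at hw
    simp only [List.cons_append, walkPairs_cons_cons, List.mem_cons, Prod.mk.injEq] at h
    rcases h with ⟨-, rfl⟩ | h
    · exact absurd rfl hw.1
    · rw [List.getLast?_cons_cons]
      exact getLast?_eq_of_mem_walkPairs_append hw.2 h

lemma getLast?_eq_of_mem_cyclicPairs_cons_append_cons (hvX : v ∉ X) (hvY : v ∉ Y) {u : V}
    (h : (u, v) ∈ cyclicPairs (v :: X ++ v :: Y)) :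
    (v :: X).getLast? = some u ∨ (v :: Y).getLast? = some u := by
  rw [cyclicPairs_cons_append_cons, List.mem_append] at h
  exact h.imp (getLast?_eq_of_mem_walkPairs_append hvX) (getLast?_eq_of_mem_walkPairs_append hvY)

lemma mem_cyclicPairs_cyclicPairs_cons_append_cons {a b : V} (ha : X.getLast? = some a)
    (hb : Y.head? = some b) :
    ((a, v), (v, b)) ∈ cyclicPairs (cyclicPairs (v :: X ++ v :: Y)) := by
  obtain ⟨X₀, rfl⟩ := List.getLast?_eq_some_iff.mp ha
  obtain ⟨Y₀, rfl⟩ := List.head?_eq_some_iff.mp hb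
  have : cyclicPairs (v :: (X₀ ++ [a]) ++ v :: b :: Y₀) =
      walkPairs (v :: X₀ ++ [a]) ++ (a, v) :: (v, b) :: walkPairs (b :: Y₀ ++ [v]) := by
    rw [cyclicPairs_cons_append_cons,
      show v :: (X₀ ++ [a]) ++ [v] = (v :: X₀) ++ a :: [v] by simp, walkPairs_append_cons]
    simp
  rw [this]
  exact mem_cyclicPairs_append_cons_cons _ _ _ _

lemma head?_eq_of_mem_cyclicPairs_cyclicPairs (hnd : (cyclicPairs (v :: X ++ v :: Y)).Nodup)
    (hY : Y ≠ []) {u w : V}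
    (h : ((u, v), (v, w)) ∈ cyclicPairs (cyclicPairs (v :: X ++ v :: Y)))
    (hu : X.getLast? = some u) : Y.head? = some w := by
  obtain ⟨y, hy⟩ := Option.ne_none_iff_exists'.mp (mt List.head?_eq_none_iff.mp hY)
  have := hnd.eq_of_mem_cyclicPairs h (mem_cyclicPairs_cyclicPairs_cons_append_cons hu hy)
  rw [hy, (Prod.mk.inj this).2]

lemma appears_cons_append_cons (hnd : (cyclicPairs (v :: X ++ v :: Y)).Nodup) (hvX : v ∉ X)
    (hvY : v ∉ Y) (hX : X ≠ []) (hY : Y ≠ []) {u w : V}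
    (h : Appears [u, v, w] (v :: X ++ v :: Y)) :
    (X.getLast? = some u ∧ Y.head? = some w) ∨ (Y.getLast? = some u ∧ X.head? = some w) := by
  have ht := mem_cyclicPairs_cyclicPairs_of_appears h
  have hnd' : (cyclicPairs (v :: Y ++ v :: X)).Nodup := by
    rw [← rotate_cons_append_cons, cyclicPairs_rotate]
    exact List.nodup_rotate.mpr hnd
  rcases getLast?_eq_of_mem_cyclicPairs_cons_append_cons hvX hvY (List.of_mem_zip ht).1 with hu | hu
  · rw [List.getLast?_cons_of_ne_nil hX] at hu
    exact Or.inl ⟨hu, head?_eq_of_mem_cyclicPairs_cyclicPairs hnd hY ht hu⟩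
  · rw [List.getLast?_cons_of_ne_nil hY] at hu
    exact Or.inr ⟨hu, head?_eq_of_mem_cyclicPairs_cyclicPairs hnd' hX
      (mem_cyclicPairs_cyclicPairs_cons_append_cons_comm.mp ht) hu⟩

lemma head?_ne_head? (hnd : (cyclicPairs (v :: X ++ v :: Y)).Nodup) (hX : X ≠ [])
    (hY : Y ≠ []) : X.head? ≠ Y.head? := by
  obtain ⟨x, X, rfl⟩ := List.exists_cons_of_ne_nil hX
  obtain ⟨y, Y, rfl⟩ := List.exists_cons_of_ne_nil hY
  rw [cyclicPairs_cons_append_cons] at hnd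
  rintro ⟨⟩
  exact List.disjoint_of_nodup_append hnd (a := (v, x)) (by simp) (by simp)

lemma getLast?_ne_getLast? (hnd : (cyclicPairs (v :: X ++ v :: Y)).Nodup) (hX : X ≠ [])
    (hY : Y ≠ []) : X.getLast? ≠ Y.getLast? := by
  obtain ⟨X, x, rfl⟩ := (List.eq_nil_or_concat X).resolve_left hX
  obtain ⟨Y, y, rfl⟩ := (List.eq_nil_or_concat Y).resolve_left hY
  rw [cyclicPairs_cons_append_cons] at hnd
  intro hxy
  simp only [List.concat_eq_append, List.getLast?_concat, Option.some.injEq] at hxy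
  subst hxy
  exact List.disjoint_of_nodup_append hnd
    (by simpa using mem_walkPairs_append_cons_cons (v :: X) x v [])
    (by simpa using mem_walkPairs_append_cons_cons (v :: Y) x v [])

end TwoVisits

lemma cyclicPairs_perm_swap {V : Type*} (a b : V) (A B C D : List V) :
    (cyclicPairs (a :: (A ++ b :: D) ++ a :: (C ++ b :: B))).Perm
      (cyclicPairs (a :: (A ++ b :: B) ++ a :: (C ++ b :: D))) := by
  have split (P Q : List V) :
      walkPairs (a :: (P ++ b :: Q) ++ [a]) =
        walkPairs (a :: P ++ [b]) ++ walkPairs (b :: Q ++ [a]) := by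
    rw [show a :: (P ++ b :: Q) ++ [a] = (a :: P) ++ b :: (Q ++ [a]) by simp, walkPairs_append_cons]
    rfl
  classical
  simp only [cyclicPairs_cons_append_cons, split]
  refine List.perm_iff_count.mpr fun p => ?_
  simp only [List.count_append]
  omega

lemma not_appears_swap {V : Type*} {v z u w : V} {X₁ X₂ Y₁ Y₂ : List V}
    (hnd : (cyclicPairs (v :: (X₁ ++ z :: X₂) ++ v :: (Y₁ ++ z :: Y₂))).Nodup)
    (hvX : v ∉ X₁ ++ z :: X₂) (hvY : v ∉ Y₁ ++ z :: Y₂)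
    (h : Appears [u, v, w] (v :: (X₁ ++ z :: X₂) ++ v :: (Y₁ ++ z :: Y₂))) :
    ¬ Appears [u, v, w] (v :: (X₁ ++ z :: Y₂) ++ v :: (Y₁ ++ z :: X₂)) := by
  intro h'
  have hnd' := (cyclicPairs_perm_swap v z X₁ X₂ Y₁ Y₂).nodup_iff.mpr hnd
  have hhead := head?_ne_head? hnd (by simp) (by simp)
  have hlast := getLast?_ne_getLast? hnd (by simp) (by simp)
  have ht := appears_cons_append_cons hnd hvX hvY (by simp) (by simp) h
  have ht' := appears_cons_append_cons hnd' (by simp_all) (by simp_all) (by simp) (by simp) h'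
  -- the transitions at `v` are `(last X, head Y), (last Y, head X)` before the swap and
  -- `(last Y, head Y), (last X, head X)` after it
  simp only [List.head?_append, List.getLast?_append] at hhead hlast ht ht'
  grind

namespace IsEulerianCircuit

variable {V : Type*} {E : V → V → Prop} {c : List V}

lemma of_perm (hc : IsEulerianCircuit E c) {c' : List V} (hne : c' ≠ [])
    (hp : (cyclicPairs c').Perm (cyclicPairs c)) : IsEulerianCircuit E c' :=
  ⟨hne, hp.nodup_iff.mpr hc.2.1, fun p => hp.mem_iff.trans (hc.2.2 p)⟩

lemma rotate (hc : IsEulerianCircuit E c) (n : ℕ) : IsEulerianCircuit E (c.rotate n) :=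
  hc.of_perm (by simpa using hc.1) (by rw [cyclicPairs_rotate]; exact List.rotate_perm _ _)

lemma swap {v z : V} {X₁ X₂ Y₁ Y₂ : List V}
    (hc : IsEulerianCircuit E (v :: (X₁ ++ z :: X₂) ++ v :: (Y₁ ++ z :: Y₂))) :
    IsEulerianCircuit E (v :: (X₁ ++ z :: Y₂) ++ v :: (Y₁ ++ z :: X₂)) :=
  hc.of_perm (by simp) (cyclicPairs_perm_swap v z X₁ X₂ Y₁ Y₂)

lemma count_eq_outdeg [DecidableEq V] (hc : IsEulerianCircuit E c) (v : V) :
    c.count v = outdeg E v := by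
  set L := ((cyclicPairs c).filter (·.1 = v)).map Prod.snd
  have hcount : c.count v = L.length := by
    have hfst : (cyclicPairs c).map Prod.fst = c := List.map_fst_zip (by simp)
    rw [← hfst, List.count_eq_countP, List.countP_map, List.countP_eq_length_filter,
      List.length_map]
    congr 2
  have hnd : L.Nodup := by
    refine List.Nodup.map_on ?_ (hc.2.1.filter _)
    intro p hp q hq hpq
    simp only [List.mem_filter, decide_eq_true_eq] at hp hq
    exact Prod.ext (hp.2.trans hq.2.symm) hpq
  have hL : {w | E v w} = ↑L.toFinset := by
    ext w
    simp [L, hc.2.2]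
  rw [hcount, outdeg, hL, Set.ncard_coe_finset, List.toFinset_card_of_nodup hnd]

lemma left_ne_nil {v : V} {X Y : List V} (hc : IsEulerianCircuit E (v :: X ++ v :: Y))
    (hloop : ∀ x : V, ¬ E x x) : X ≠ [] := by
  rintro rfl
  exact hloop v ((hc.2.2 (v, v)).mp (by simpa using mem_cyclicPairs_append_cons_cons [] v v Y))

lemma right_ne_nil {v : V} {X Y : List V} (hc : IsEulerianCircuit E (v :: X ++ v :: Y))
    (hloop : ∀ x : V, ¬ E x x) : Y ≠ [] := by
  have := hc.rotate (X.length + 1)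
  rw [rotate_cons_append_cons] at this
  exact this.left_ne_nil hloop

lemma exists_mem_mem_of_not_isCutNode {v : V} {X Y : List V}
    (hc : IsEulerianCircuit E (v :: X ++ v :: Y)) (hvX : v ∉ X) (hvY : v ∉ Y) (hX : X ≠ [])
    (hY : Y ≠ []) (hv : ¬ IsCutNode (underlyingUG E) v) : ∃ z ∈ X, z ∈ Y := by
  obtain ⟨x, hx⟩ := List.exists_mem_of_ne_nil X hX
  obtain ⟨y, hy⟩ := List.exists_mem_of_ne_nil Y hY
  by_cases hyX : y ∈ X
  · exact ⟨y, hyX, hy⟩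
  have hconn : ((underlyingUG E).induce {u | u ≠ v}).Connected := not_not.mp hv
  obtain ⟨p⟩ :=
    hconn.preconnected ⟨x, fun h => hvX (h ▸ hx)⟩ ⟨y, fun h => hvY (h ▸ hy)⟩
  obtain ⟨d, -, hdX, hdX'⟩ := p.exists_boundary_dart {w | w.1 ∈ X} hx hyX
  obtain ⟨-, hE⟩ : _ ∧ (E d.fst d.snd ∨ E d.snd d.fst) := d.adj
  have hedge {a b : V} (hab : E a b) (ha : a ≠ v) (hb : b ≠ v) :=
    mem_of_mem_cyclicPairs_cons_append_cons ((hc.2.2 (a, b)).mpr hab) ha hb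
  rcases hE with hE | hE
  · rcases hedge hE d.fst.2 d.snd.2 with h | h
    exacts [absurd h.2 hdX', ⟨_, hdX, h.1⟩]
  · rcases hedge hE d.snd.2 d.fst.2 with h | h
    exacts [absurd h.1 hdX', ⟨_, hdX, h.2⟩]

end IsEulerianCircuit

theorem non_cut_degree_two_not_safe_general {V : Type*} (E : V → V → Prop)
    (hloop : ∀ x : V, ¬ E x x)
    (heul : ∃ c : List V, IsEulerianCircuit E c)
    (v u1 w1 w2 : V) (hw12 : w1 ≠ w2)
    (hout : {w : V | E v w} = {w1, w2})
    (hnotcut : ¬ IsCutNode (underlyingUG E) v) :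
    ∃ c : List V, IsEulerianCircuit E c ∧ ¬ Appears [u1, v, w1] c := by
  classical
  obtain ⟨c, hc⟩ := heul
  have hcount : c.count v = 2 := by rw [hc.count_eq_outdeg, outdeg, hout, Set.ncard_pair hw12]
  obtain ⟨n, X, Y, hrot, hvX, hvY⟩ := List.exists_rotate_eq_cons_append_cons hcount
  have hXY : IsEulerianCircuit E (v :: X ++ v :: Y) := hrot ▸ hc.rotate n
  by_cases happ : Appears [u1, v, w1] (v :: X ++ v :: Y)
  · obtain ⟨z, hzX, hzY⟩ := hXY.exists_mem_mem_of_not_isCutNode hvX hvY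
      (hXY.left_ne_nil hloop) (hXY.right_ne_nil hloop) hnotcut
    obtain ⟨X₁, X₂, rfl⟩ := List.append_of_mem hzX
    obtain ⟨Y₁, Y₂, rfl⟩ := List.append_of_mem hzY
    exact ⟨_, hXY.swap, not_appears_swap hXY.2.1 hvX hvY happ⟩
  · exact ⟨_, hXY, happ⟩

/-- If `d(v) = 2` and `v` is not a cut node of `U(G)`, with in-neighbors `u1, u2` and
out-neighbors `w1, w2`, then some Eulerian circuit avoids the walk `(u1, v, w1)`. -/
theorem non_cut_degree_two_not_safe {V : Type*} [Fintype V] (E : V → V → Prop)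
    (hloop : ∀ x : V, ¬ E x x) (hconn : (underlyingUG E).Connected)
    (heul : ∃ c : List V, IsEulerianCircuit E c)
    (v u1 u2 w1 w2 : V) (hu12 : u1 ≠ u2) (hw12 : w1 ≠ w2)
    (hin : {u : V | E u v} = {u1, u2}) (hout : {w : V | E v w} = {w1, w2})
    (hnotcut : ¬ IsCutNode (underlyingUG E) v) :
    ∃ c : List V, IsEulerianCircuit E c ∧ ¬ Appears [u1, v, w1] c :=
  non_cut_degree_two_not_safe_general E hloop heul v u1 w1 w2 hw12 hout hnotcut
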